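/- If μ and ν are distinct Borel probability measures on Σ^ℤ with ν shift-invariant and μ ergodic (shift-invariant with all shift-invariant sets of measure 0 or 1), then the pseudometrics δ^μ and δ^ν induce distinct topologies on the set of cellular automata: there exists a sequence (cᵢ) of cellular automata with δ^μ(cᵢ, id) → 0 but δ^ν(cᵢ, id) not converging to 0. -/

import Mathlib

open MeasureTheory Filter Function

section BasicDefs

variable {A : Type}

/-- `f` admits a local rule of radius `r`: there is `F` depending only on
coordinates in `[-r, r]` such that `f x i = F (σ^i x)`. -/
def HasRadius (r : ℕ) (f : (ℤ → A) → (ℤ → A)) : Prop :=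
  ∃ F : (ℤ → A) → A,
    (∀ x y : ℤ → A, (∀ j : ℤ, |j| ≤ (r : ℤ) → x j = y j) → F x = F y) ∧
    ∀ (x : ℤ → A) (i : ℤ), f x i = F fun j => x (i + j)

/-- A cellular automaton is a map admitting a local rule of some radius. -/
def IsCA (f : (ℤ → A) → (ℤ → A)) : Prop := ∃ r, HasRadius r f

/-- The minimal radius of a cellular automaton. -/
noncomputable def rad (f : (ℤ → A) → (ℤ → A)) : ℕ := sInf {r : ℕ | HasRadius r f}

/-- Centered words of radius `r`. -/
def Word (A : Type) (r : ℕ) := (Finset.Icc (-(r : ℤ)) (r : ℤ) : Finset ℤ) → A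

/-- The difference set of `c` and `d` for radius `r`: centered words of radius `r`
on which the images of `c` and `d` differ at the central cell. -/
def diffSet (r : ℕ) (c d : (ℤ → A) → (ℤ → A)) : Set (Word A r) :=
  {w | ∃ x : ℤ → A, (∀ j : (Finset.Icc (-(r : ℤ)) (r : ℤ) : Finset ℤ), x j.1 = w j) ∧
        c x 0 ≠ d x 0}

/-- The shift map. -/
def shift (x : ℤ → A) : ℤ → A := fun i => x (i + 1)

/-- Preimages of the centered word `v` of radius `n` under the word function of `c`
used with radius `r`: centered words `u` of radius `n + r` such that some (equivalently,
by the radius assumption, every) configuration extending `u` maps under `c` to a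
configuration extending `v` in its central part. -/
def wordPreimages (c : (ℤ → A) → (ℤ → A)) (n r : ℕ) (v : Word A n) :
    Set (Word A (n + r)) :=
  {u | ∃ x : ℤ → A,
        (∀ j : (Finset.Icc (-((n + r : ℕ) : ℤ)) ((n + r : ℕ) : ℤ) : Finset ℤ), x j.1 = u j) ∧
        ∀ j : (Finset.Icc (-(n : ℤ)) (n : ℤ) : Finset ℤ), c x j.1 = v j}

-- The Cantor metric on configurations.
open Classical in
noncomputable def dC (x y : ℤ → A) : ℝ :=
  ∑' i : ℤ, if x i ≠ y i then (2 : ℝ) ^ (-|i|) else 0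

/-- The Besicovitch pseudodistance on configurations. -/
noncomputable def dB (x y : ℤ → A) : ℝ :=
  limsup (fun n : ℕ =>
    (({i : ℤ | |i| ≤ (n : ℤ) ∧ x i ≠ y i}.ncard : ℝ)) / (2 * (n : ℝ) + 1)) atTop

end BasicDefs

section FintypeDefs

variable {A : Type} [Fintype A]

/-- The normalized size of the difference set for radius `r`. -/
noncomputable def deltaR (r : ℕ) (c d : (ℤ → A) → (ℤ → A)) : ℝ :=
  (diffSet r c d).ncard / (Fintype.card A : ℝ) ^ (2 * r + 1)

/-- The uniform Bernoulli distance between two cellular automata (computed with the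
common radius `max (rad c) (rad d)`; by radius-independence this is the canonical value). -/
noncomputable def delta (c d : (ℤ → A) → (ℤ → A)) : ℝ :=
  deltaR (max (rad c) (rad d)) c d

end FintypeDefs

section MeasureDefs

variable {A : Type} [MeasurableSpace A]

/-- The pseudometric on cellular automata induced by the measure `μ`:
the measure of the cylinder of the difference set, i.e. of the set of
configurations on which `c` and `d` differ at coordinate `0`. -/
noncomputable def deltaMu (μ : Measure (ℤ → A)) (c d : (ℤ → A) → (ℤ → A)) : ℝ :=
  (μ {x | c x 0 ≠ d x 0}).toReal

/-- `c` preserves the measure `μ`. -/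
def Preserves (μ : Measure (ℤ → A)) (c : (ℤ → A) → (ℤ → A)) : Prop :=
  ∀ B : Set (ℤ → A), MeasurableSet B → μ (c ⁻¹' B) = μ B

/-- `μ` is shift-invariant. -/
def ShiftInvariant (μ : Measure (ℤ → A)) : Prop :=
  ∀ B : Set (ℤ → A), MeasurableSet B → μ (shift ⁻¹' B) = μ B

end MeasureDefs



/-!
By ergodicity of `μ`, an invariant `ν ≠ μ` cannot be absolutely continuous with respect to `μ`,
so some measurable set `B` is `μ`-null but has positive `ν`-measure. Approximate `B` for `μ + ν`
by cylinders `Cₙ`. The automaton applying a fixed-point-free map to the central cell exactly on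
`Cₙ` differs from the identity at the origin precisely on `Cₙ`, so its `δ^μ`- and
`δ^ν`-distances to the identity tend to `μ B = 0` and `ν B > 0` respectively.
-/

open Set Topology
open scoped ENNReal symmDiff

lemma exists_forall_ne_self (A : Type*) [Nontrivial A] : ∃ τ : A → A, ∀ a, τ a ≠ a := by
  classical
  obtain ⟨a, b, hab⟩ := exists_pair_ne A
  refine ⟨fun x => if x = a then b else a, fun x => ?_⟩
  by_cases hx : x = a
  · simp [hx, hab.symm]
  · simp [hx, Ne.symm hx]

theorem Ergodic.exists_measurableSet_measure_eq_zero_pos {α : Type*} [MeasurableSpace α]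
    {f : α → α} {μ ν : Measure α} [IsProbabilityMeasure μ] [IsProbabilityMeasure ν]
    (hμ : Ergodic f μ) (hν : MeasurePreserving f ν ν) (hne : μ ≠ ν) :
    ∃ B, MeasurableSet B ∧ μ B = 0 ∧ 0 < ν B := by
  by_contra! h
  exact hne (hμ.eq_of_absolutelyContinuous hν
    (Measure.AbsolutelyContinuous.mk fun s hs hμs => nonpos_iff_eq_zero.1 (h s hs hμs))).symm

theorem exists_seq_mem_measurableCylinders_tendsto_measure_symmDiff {ι : Type*} {α : ι → Type*}
    [∀ i, MeasurableSpace (α i)] (ρ : Measure (∀ i, α i)) [IsFiniteMeasure ρ]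
    {B : Set (∀ i, α i)} (hB : MeasurableSet B) :
    ∃ t : ℕ → Set (∀ i, α i), (∀ n, t n ∈ measurableCylinders α) ∧
      Tendsto (fun n => ρ (t n ∆ B)) atTop (𝓝 0) := by
  have approx : ∀ ε : ℝ≥0∞, 0 < ε → ∃ t ∈ measurableCylinders α, ρ (t ∆ B) < ε :=
    fun ε hε => exists_measure_symmDiff_lt_of_generateFrom_isSetRing
      isSetRing_measurableCylinders
      ⟨{univ}, countable_singleton _, by simpa using univ_mem_measurableCylinders α, by simp⟩
      generateFrom_measurableCylinders.symm hB hε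
  choose t ht hlt using fun n : ℕ =>
    approx (n : ℝ≥0∞)⁻¹ (ENNReal.inv_pos.2 (ENNReal.natCast_ne_top n))
  exact ⟨t, ht, tendsto_of_tendsto_of_tendsto_of_le_of_le tendsto_const_nhds
    ENNReal.tendsto_inv_nat_nhds_zero (fun _ => zero_le) (fun n => (hlt n).le)⟩

theorem tendsto_measureReal_of_tendsto_measure_symmDiff {α ι : Type*} [MeasurableSpace α]
    {μ : Measure α} [IsFiniteMeasure μ] {l : Filter ι} {t : ι → Set α} {s : Set α}
    (ht : ∀ n, MeasurableSet (t n)) (hs : MeasurableSet s)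
    (h : Tendsto (fun n => μ (t n ∆ s)) l (𝓝 0)) :
    Tendsto (fun n => μ.real (t n)) l (𝓝 (μ.real s)) := by
  have h' : Tendsto (fun n => μ.real (t n ∆ s)) l (𝓝 0) :=
    (ENNReal.tendsto_toReal ENNReal.zero_ne_top).comp h
  rw [tendsto_iff_norm_sub_tendsto_zero]
  exact squeeze_zero (fun _ => norm_nonneg _)
    (fun n => abs_measureReal_sub_le_measureReal_symmDiff (ht n).nullMeasurableSet
      hs.nullMeasurableSet) h'

section Automata

variable {A : Type}

lemma measurable_shift [MeasurableSpace A] : Measurable (shift (A := A)) :=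
  measurable_pi_lambda _ fun _ => measurable_pi_apply _

lemma ShiftInvariant.measurePreserving [MeasurableSpace A] {μ : Measure (ℤ → A)}
    (h : ShiftInvariant μ) : MeasurePreserving shift μ μ :=
  ⟨measurable_shift, Measure.ext fun s hs => by rw [Measure.map_apply measurable_shift hs, h s hs]⟩

lemma ergodic_shift [MeasurableSpace A] {μ : Measure (ℤ → A)} [IsProbabilityMeasure μ]
    (hμ : ShiftInvariant μ)
    (herg : ∀ B : Set (ℤ → A), MeasurableSet B → shift ⁻¹' B = B → μ B = 0 ∨ μ B = 1) :
    Ergodic shift μ := by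
  refine ⟨hμ.measurePreserving, ⟨fun s hs hinv => ?_⟩⟩
  rw [eventuallyConst_set']
  rcases herg s hs hinv with h0 | h1
  · exact Or.inl (ae_eq_empty.2 h0)
  · exact Or.inr (ae_eq_univ.2 ((prob_compl_eq_zero_iff hs).2 h1))

noncomputable def centralFlip (τ : A → A) (C : Set (ℤ → A)) (y : ℤ → A) : A :=
  open Classical in if y ∈ C then τ (y 0) else y 0

noncomputable def flipOn (τ : A → A) (C : Set (ℤ → A)) (x : ℤ → A) : ℤ → A :=
  fun i => centralFlip τ C fun j => x (i + j)

lemma isCA_flipOn [MeasurableSpace A] (τ : A → A) {C : Set (ℤ → A)}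
    (hC : C ∈ measurableCylinders fun _ : ℤ => A) : IsCA (flipOn τ C) := by
  obtain ⟨s, S, -, rfl⟩ := (mem_measurableCylinders C).1 hC
  refine ⟨s.sup Int.natAbs, centralFlip τ (cylinder s S), fun x y hxy => ?_, fun _ _ => rfl⟩
  have hres : s.restrict x = s.restrict y := funext fun i => hxy i (by
    rw [Int.abs_eq_natAbs]; exact_mod_cast Finset.le_sup (f := Int.natAbs) i.2)
  have hmem : x ∈ cylinder s S ↔ y ∈ cylinder s S := by rw [mem_cylinder, mem_cylinder, hres]
  rw [centralFlip, centralFlip, hxy 0 (by simp)]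
  classical
  exact if_congr hmem rfl rfl

lemma deltaMu_flipOn_id [MeasurableSpace A] (μ : Measure (ℤ → A)) {τ : A → A}
    (hτ : ∀ a, τ a ≠ a) (C : Set (ℤ → A)) : deltaMu μ (flipOn τ C) id = μ.real C := by
  classical
  have hset : {x | flipOn τ C x 0 ≠ id x 0} = C := by
    ext x
    by_cases hx : x ∈ C <;> simp [flipOn, centralFlip, hx, hτ]
  rw [deltaMu, hset, measureReal_def]

end Automata

/-- if `μ ≠ ν`, `ν` is shift-invariant and `μ` is ergodic, then `δ^μ`
and `δ^ν` induce distinct topologies: some sequence of CA converges to the identity in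
`δ^μ` but not in `δ^ν`. -/
theorem stmt13 {A : Type} [Fintype A] [MeasurableSpace A] (hA : 2 ≤ Fintype.card A)
    (μ ν : Measure (ℤ → A)) [IsProbabilityMeasure μ] [IsProbabilityMeasure ν]
    (hne : μ ≠ ν) (hν : ShiftInvariant ν) (hμ : ShiftInvariant μ)
    (herg : ∀ B : Set (ℤ → A), MeasurableSet B → shift ⁻¹' B = B →
      μ B = 0 ∨ μ B = 1) :
    ∃ cs : ℕ → (ℤ → A) → (ℤ → A), (∀ i, IsCA (cs i)) ∧
      Tendsto (fun i => deltaMu μ (cs i) id) atTop (nhds 0) ∧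
      ¬ Tendsto (fun i => deltaMu ν (cs i) id) atTop (nhds 0) := by
  have : Nontrivial A := Fintype.one_lt_card_iff_nontrivial.1 hA
  obtain ⟨τ, hτ⟩ := exists_forall_ne_self A
  obtain ⟨B, hB, hμB, hνB⟩ :=
    (ergodic_shift hμ herg).exists_measurableSet_measure_eq_zero_pos hν.measurePreserving hne
  obtain ⟨t, ht, hlim⟩ := exists_seq_mem_measurableCylinders_tendsto_measure_symmDiff (μ + ν) hB
  simp only [Measure.add_apply] at hlim
  have htm n : MeasurableSet (t n) := .of_mem_measurableCylinders (ht n)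
  have hμt := tendsto_measureReal_of_tendsto_measure_symmDiff (μ := μ) htm hB <|
    tendsto_of_tendsto_of_tendsto_of_le_of_le tendsto_const_nhds hlim
      (fun _ => zero_le) (fun _ => le_self_add)
  have hνt := tendsto_measureReal_of_tendsto_measure_symmDiff (μ := ν) htm hB <|
    tendsto_of_tendsto_of_tendsto_of_le_of_le tendsto_const_nhds hlim
      (fun _ => zero_le) (fun _ => le_add_self)
  refine ⟨fun n => flipOn τ (t n), fun n => isCA_flipOn τ (ht n), ?_, fun h0 => ?_⟩
  · simpa only [deltaMu_flipOn_id μ hτ, measureReal_def, hμB, ENNReal.toReal_zero] using hμt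
  · simp only [deltaMu_flipOn_id ν hτ] at h0
    exact (ENNReal.toReal_pos hνB.ne' (measure_ne_top ν B)).ne' (tendsto_nhds_unique hνt h0)
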